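/- Let n ≥ 1, m ≥ 1, let Θ be an arbitrary parameter type, and for each θ ∈ Θ and each j ∈ {1,…,m} let P_j(θ) be an invertible real n×n matrix and f_j(θ) ∈ ℝⁿ a vector. Let y_j ∈ ℝⁿ and σ_j² > 0 for each j, and let λ > 0. Define L(θ) := sup over (x_1,…,x_m) ∈ (ℝⁿ)^m of Σⱼ [ −(1/(2σ_j²))‖y_j − x_j‖² − (λ/2)‖P_j(θ) x_j − f_j(θ)‖² ], and define g(θ) := −Σⱼ (1/(2σ_j²)) ⟨ỹ_j(θ), (I − (I + σ_j²λ P_j(θ)ᵀ P_j(θ))⁻¹) ỹ_j(θ)⟩ where ỹ_j(θ) := y_j − P_j(θ)⁻¹ f_j(θ). Then L(θ) = g(θ) for every θ ∈ Θ; consequently a parameter θ₀ maximizes L over Θ if and only if it maximizes g over Θ. -/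

import Mathlib

/-!
For fixed `θ` the objective separates over `j`, so its supremum is the sum of the blockwise
maxima. In one block, substituting `x = P⁻¹ f + u` turns the objective into
`-(1/(2σ²)) (‖ỹ - u‖² + σ²λ ‖P u‖²)`, a Tikhonov problem. Its minimiser `z` solves
`(I + σ²λ PᵀP) z = ỹ`, and completing the square around `z` shows that the minimum is
`⟨ỹ, ỹ - z⟩ = ⟨ỹ, (I - (I + σ²λ PᵀP)⁻¹) ỹ⟩`.
-/

open Matrix Set

theorem transpose_mulVec_dotProduct {R ι : Type*} [CommSemiring R] [Fintype ι]
    (A : Matrix ι ι R) (a b : ι → R) : (Aᵀ *ᵥ a) ⬝ᵥ b = a ⬝ᵥ (A *ᵥ b) := by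
  rw [mulVec_transpose, ← dotProduct_mulVec]

def tikhonovLoss {R ι : Type*} [CommRing R] [Fintype ι] (P : Matrix ι ι R) (c : R)
    (v u : ι → R) : R :=
  (v - u) ⬝ᵥ (v - u) + c * ((P *ᵥ u) ⬝ᵥ (P *ᵥ u))

noncomputable def penalizedLogLik {ι : Type*} [Fintype ι] (σ2 lam : ℝ) (P : Matrix ι ι ℝ)
    (f y x : ι → ℝ) : ℝ :=
  -(1 / (2 * σ2)) * ((y - x) ⬝ᵥ (y - x)) - (lam / 2) * ((P *ᵥ x - f) ⬝ᵥ (P *ᵥ x - f))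

theorem tikhonovLoss_eq_of_mulVec_eq {R ι : Type*} [CommRing R] [Fintype ι] [DecidableEq ι]
    (P : Matrix ι ι R) (c : R) {v z : ι → R} (hz : (1 + c • (Pᵀ * P)) *ᵥ z = v) (u : ι → R) :
    tikhonovLoss P c v u = v ⬝ᵥ (v - z) + tikhonovLoss P c 0 (u - z) := by
  rw [add_mulVec, one_mulVec, smul_mulVec, ← mulVec_mulVec] at hz
  obtain ⟨w, rfl⟩ : ∃ w, u = z + w := ⟨u - z, by abel⟩
  subst hz
  have hadj := transpose_mulVec_dotProduct P (P *ᵥ z)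
  simp only [tikhonovLoss, zero_sub, add_sub_cancel_left, add_sub_add_left_eq_sub, mulVec_add,
    neg_dotProduct, dotProduct_neg, neg_neg, dotProduct_add, add_dotProduct, sub_dotProduct,
    dotProduct_sub, smul_dotProduct, dotProduct_smul, smul_eq_mul]
  linear_combination c * dotProduct_comm (P *ᵥ w) (P *ᵥ z) - 2 * c * hadj w - c * hadj z
    - c * dotProduct_comm w (Pᵀ *ᵥ (P *ᵥ z)) - c * dotProduct_comm z (Pᵀ *ᵥ (P *ᵥ z))

theorem posDef_one_add_smul_transpose_mul_self {ι : Type*} [Fintype ι] [DecidableEq ι]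
    (P : Matrix ι ι ℝ) {c : ℝ} (hc : 0 ≤ c) : (1 + c • (Pᵀ * P)).PosDef :=
  PosDef.one.add_posSemidef <| by
    simpa using (posSemidef_conjTranspose_mul_self P).smul hc

theorem tikhonovLoss_nonneg {ι : Type*} [Fintype ι] (P : Matrix ι ι ℝ) {c : ℝ} (hc : 0 ≤ c)
    (v u : ι → ℝ) : 0 ≤ tikhonovLoss P c v u :=
  add_nonneg (dotProduct_self_star_nonneg _) (mul_nonneg hc (dotProduct_self_star_nonneg _))

theorem isLeast_range_tikhonovLoss {ι : Type*} [Fintype ι] [DecidableEq ι]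
    (P : Matrix ι ι ℝ) {c : ℝ} (hc : 0 ≤ c) (v : ι → ℝ) :
    IsLeast (range (tikhonovLoss P c v)) (v ⬝ᵥ ((1 - (1 + c • (Pᵀ * P))⁻¹) *ᵥ v)) := by
  set M := 1 + c • (Pᵀ * P)
  have hM : IsUnit M.det :=
    M.isUnit_iff_isUnit_det.mp (posDef_one_add_smul_transpose_mul_self P hc).isUnit
  have hz : M *ᵥ (M⁻¹ *ᵥ v) = v := by rw [mulVec_mulVec, mul_nonsing_inv M hM, one_mulVec]
  rw [sub_mulVec, one_mulVec]
  refine ⟨⟨M⁻¹ *ᵥ v, ?_⟩, ?_⟩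
  · rw [tikhonovLoss_eq_of_mulVec_eq P c hz]
    simp [tikhonovLoss]
  · rintro _ ⟨u, rfl⟩
    rw [tikhonovLoss_eq_of_mulVec_eq P c hz u, le_add_iff_nonneg_right]
    exact tikhonovLoss_nonneg P hc _ _

theorem penalizedLogLik_eq_neg_tikhonovLoss {ι : Type*} [Fintype ι] [DecidableEq ι]
    {P : Matrix ι ι ℝ} (hP : IsUnit P) (f y x : ι → ℝ) {σ2 : ℝ} (hσ2 : σ2 ≠ 0) (lam : ℝ) :
    penalizedLogLik σ2 lam P f y x =
      -(1 / (2 * σ2) * tikhonovLoss P (σ2 * lam) (y - P⁻¹ *ᵥ f) (x - P⁻¹ *ᵥ f)) := by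
  have hPf : P *ᵥ (P⁻¹ *ᵥ f) = f := by
    rw [mulVec_mulVec, mul_nonsing_inv P (P.isUnit_iff_isUnit_det.mp hP), one_mulVec]
  rw [penalizedLogLik, tikhonovLoss, sub_sub_sub_cancel_right, mulVec_sub, hPf]
  field_simp
  ring

theorem isGreatest_range_penalizedLogLik {ι : Type*} [Fintype ι] [DecidableEq ι]
    {P : Matrix ι ι ℝ} (hP : IsUnit P) (f y : ι → ℝ) {σ2 lam : ℝ} (hσ2 : 0 < σ2)
    (hlam : 0 ≤ lam) :
    IsGreatest (range (penalizedLogLik σ2 lam P f y))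
      (-((1 / (2 * σ2)) * ((y - P⁻¹ *ᵥ f) ⬝ᵥ
        ((1 - (1 + (σ2 * lam) • (Pᵀ * P))⁻¹) *ᵥ (y - P⁻¹ *ᵥ f))))) := by
  obtain ⟨⟨u, hu⟩, hle⟩ := isLeast_range_tikhonovLoss P (mul_nonneg hσ2.le hlam) (y - P⁻¹ *ᵥ f)
  refine ⟨⟨u + P⁻¹ *ᵥ f, ?_⟩, ?_⟩
  · rw [penalizedLogLik_eq_neg_tikhonovLoss hP _ _ _ hσ2.ne', add_sub_cancel_right, hu]
  · rintro _ ⟨x, rfl⟩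
    rw [penalizedLogLik_eq_neg_tikhonovLoss hP _ _ _ hσ2.ne', neg_le_neg_iff]
    exact mul_le_mul_of_nonneg_left (hle ⟨_, rfl⟩) (by positivity)

theorem isGreatest_range_sum {ι M : Type*} [Fintype ι] [AddCommMonoid M] [PartialOrder M]
    [IsOrderedAddMonoid M] {α : ι → Type*} {F : ∀ i, α i → M} {a : ι → M}
    (h : ∀ i, IsGreatest (range (F i)) (a i)) :
    IsGreatest (range fun x : ∀ i, α i => ∑ i, F i (x i)) (∑ i, a i) := by
  choose x hx using fun i => (h i).1
  refine ⟨⟨x, Finset.sum_congr rfl fun i _ => hx i⟩, ?_⟩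
  rintro _ ⟨u, rfl⟩
  exact Finset.sum_le_sum fun i _ => (h i).2 ⟨u i, rfl⟩

theorem profiled_penalized_likelihood_system_general
    {n m : ℕ} {Θ : Type*}
    (P : Θ → Fin m → Matrix (Fin n) (Fin n) ℝ) (hP : ∀ θ j, IsUnit (P θ j))
    (f : Θ → Fin m → Fin n → ℝ) (y : Fin m → Fin n → ℝ)
    (σ2 : Fin m → ℝ) (hσ2 : ∀ j, 0 < σ2 j) (lam : ℝ) (hlam : 0 < lam)
    (ytil : Θ → Fin m → Fin n → ℝ)
    (hytil : ∀ θ j, ytil θ j = y j - (P θ j)⁻¹.mulVec (f θ j))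
    (L g : Θ → ℝ)
    (hL : ∀ θ, L θ = ⨆ x : Fin m → Fin n → ℝ, ∑ j : Fin m,
        (-(1 / (2 * σ2 j)) * ((y j - x j) ⬝ᵥ (y j - x j))
          - (lam / 2) * (((P θ j).mulVec (x j) - f θ j) ⬝ᵥ ((P θ j).mulVec (x j) - f θ j))))
    (hg : ∀ θ, g θ = -∑ j : Fin m, (1 / (2 * σ2 j)) *
        (ytil θ j ⬝ᵥ (((1 : Matrix (Fin n) (Fin n) ℝ)
            - ((1 : Matrix (Fin n) (Fin n) ℝ) + (σ2 j * lam) • ((P θ j)ᵀ * P θ j))⁻¹).mulVec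
              (ytil θ j)))) :
    (∀ θ, L θ = g θ) ∧
      ∀ θ₀ : Θ, (∀ θ, L θ ≤ L θ₀) ↔ (∀ θ, g θ ≤ g θ₀) := by
  have hLg : ∀ θ, L θ = g θ := fun θ => by
    rw [hL, hg, ← Finset.sum_neg_distrib]
    simp only [hytil]
    exact (isGreatest_range_sum fun j =>
      isGreatest_range_penalizedLogLik (hP θ j) (f θ j) (y j) (hσ2 j) hlam.le).csSup_eq
  exact ⟨hLg, fun θ₀ => by simp only [hLg]⟩

/-- **Proposition 2 of the paper.** For each parameter `θ` and each
`j ∈ {1,…,m}` let `P_j(θ)` be an invertible real `n × n` matrix and `f_j(θ) ∈ ℝⁿ`.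
Given data `y_j ∈ ℝⁿ`, variances `σ_j² > 0` and `λ > 0`, define
`L(θ) := sup over (x_1,…,x_m)` of `Σⱼ [−(1/(2σ_j²))‖y_j − x_j‖² − (λ/2)‖P_j(θ) x_j − f_j(θ)‖²]`
and
`g(θ) := −Σⱼ (1/(2σ_j²)) ⟨ỹ_j(θ), (I − (I + σ_j²λ P_j(θ)ᵀ P_j(θ))⁻¹) ỹ_j(θ)⟩`,
where `ỹ_j(θ) := y_j − P_j(θ)⁻¹ f_j(θ)`. Then `L = g`; consequently `θ₀` maximizes
`L` over `Θ` iff it maximizes `g` over `Θ`. -/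
theorem profiled_penalized_likelihood_system
    {n m : ℕ} (hn : 1 ≤ n) (hm : 1 ≤ m) {Θ : Type*}
    (P : Θ → Fin m → Matrix (Fin n) (Fin n) ℝ) (hP : ∀ θ j, IsUnit (P θ j))
    (f : Θ → Fin m → Fin n → ℝ) (y : Fin m → Fin n → ℝ)
    (σ2 : Fin m → ℝ) (hσ2 : ∀ j, 0 < σ2 j) (lam : ℝ) (hlam : 0 < lam)
    (ytil : Θ → Fin m → Fin n → ℝ)
    (hytil : ∀ θ j, ytil θ j = y j - (P θ j)⁻¹.mulVec (f θ j))
    (L g : Θ → ℝ)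
    (hL : ∀ θ, L θ = ⨆ x : Fin m → Fin n → ℝ, ∑ j : Fin m,
        (-(1 / (2 * σ2 j)) * ((y j - x j) ⬝ᵥ (y j - x j))
          - (lam / 2) * (((P θ j).mulVec (x j) - f θ j) ⬝ᵥ ((P θ j).mulVec (x j) - f θ j))))
    (hg : ∀ θ, g θ = -∑ j : Fin m, (1 / (2 * σ2 j)) *
        (ytil θ j ⬝ᵥ (((1 : Matrix (Fin n) (Fin n) ℝ)
            - ((1 : Matrix (Fin n) (Fin n) ℝ) + (σ2 j * lam) • ((P θ j)ᵀ * P θ j))⁻¹).mulVec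
              (ytil θ j)))) :
    (∀ θ, L θ = g θ) ∧
      ∀ θ₀ : Θ, (∀ θ, L θ ≤ L θ₀) ↔ (∀ θ, g θ ≤ g θ₀) :=
  profiled_penalized_likelihood_system_general P hP f y σ2 hσ2 lam hlam ytil hytil L g hL hg
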